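/- arXiv:2206.10180 — 6 statements merged into one kernel-verified Lean document; each statement's English description precedes it below -/
import Mathlib

section
/- For any p > 1, the function c⁺(x,y) = (Γ(1-1/p)·Γ(1+1/p))^{-1} (1-x^p-y^p)^{-1/p} · 1[x^p+y^p<1] on (0,1)² is a probability density with uniform U(0,1) marginals, i.e., for every x ∈ (0,1), ∫_0^1 c⁺(x,y) dy = 1. -/
open MeasureTheory Set Real

/-!
Fix `x` and put `c = (1 - x ^ p) ^ (1/p)`. In `y` the density is `K (c ^ p - y ^ p) ^ (-1/p)` on
`[0, c)` and vanishes beyond. The exponent `-1/p` makes `∫_0^c (c ^ p - y ^ p) ^ (-1/p) dy` invariant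
under the scaling `y = c u`, so it equals `∫_0^1 (1 - u ^ p) ^ (-1/p) du`, and the substitution
`t = u ^ p` turns that into `B(1/p, 1 - 1/p) / p = Γ(1 + 1/p) Γ(1 - 1/p) = K⁻¹`.
-/

theorem integral_rpow_mul_one_sub_rpow {a b : ℝ} (ha : 0 < a) (hb : 0 < b) :
    ∫ t in (0:ℝ)..1, t ^ (a - 1) * (1 - t) ^ (b - 1) = Gamma a * Gamma b / Gamma (a + b) := by
  have key := Complex.Gamma_mul_Gamma_eq_betaIntegral (s := a) (t := b) (by simpa) (by simpa)
  have hbeta : Complex.betaIntegral a b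
      = ((∫ t in (0:ℝ)..1, t ^ (a - 1) * (1 - t) ^ (b - 1) : ℝ) : ℂ) := by
    rw [Complex.betaIntegral, ← intervalIntegral.integral_ofReal]
    refine intervalIntegral.integral_congr fun t ht => ?_
    rw [uIcc_of_le zero_le_one] at ht
    rw [Complex.ofReal_mul, Complex.ofReal_cpow ht.1, Complex.ofReal_cpow (by linarith [ht.2])]
    push_cast
    ring
  rw [hbeta, ← Complex.ofReal_add, Complex.Gamma_ofReal, Complex.Gamma_ofReal,
    Complex.Gamma_ofReal, ← Complex.ofReal_mul, ← Complex.ofReal_mul] at key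
  rw [Complex.ofReal_inj.mp key, mul_div_cancel_left₀ _ (Gamma_pos_of_pos (add_pos ha hb)).ne']

theorem image_rpow_Ioo_zero_one {p : ℝ} (hp : 0 < p) :
    (fun u : ℝ => u ^ p) '' Ioo 0 1 = Ioo 0 1 := by
  ext t
  constructor
  · rintro ⟨u, hu, rfl⟩
    exact ⟨rpow_pos_of_pos hu.1 p, rpow_lt_one hu.1.le hu.2 hp⟩
  · intro ht
    exact ⟨t ^ p⁻¹, ⟨rpow_pos_of_pos ht.1 _, rpow_lt_one ht.1.le ht.2 (inv_pos.2 hp)⟩,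
      rpow_inv_rpow ht.1.le hp.ne'⟩

theorem integral_one_sub_rpow_rpow {p b : ℝ} (hp : 0 < p) (hb : 0 < b) :
    ∫ u in (0:ℝ)..1, (1 - u ^ p) ^ (b - 1) = Gamma (p⁻¹ + 1) * Gamma b / Gamma (p⁻¹ + b) := by
  have hsubst := integral_image_eq_integral_abs_deriv_smul (measurableSet_Ioo (a := (0:ℝ)) (b := 1))
    (fun u hu => (hasDerivAt_rpow_const (p := p) (Or.inl hu.1.ne')).hasDerivWithinAt)
    ((rpow_left_injOn hp.ne').mono fun u hu => hu.1.le)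
    (fun t => t ^ (p⁻¹ - 1) * (1 - t) ^ (b - 1))
  have hintegrand : EqOn (fun u => |p * u ^ (p - 1)| • ((u ^ p) ^ (p⁻¹ - 1) * (1 - u ^ p) ^ (b - 1)))
      (fun u => p * (1 - u ^ p) ^ (b - 1)) (Ioo 0 1) := by
    intro u hu
    have hu0 := hu.1
    dsimp only
    rw [abs_of_pos (by positivity), smul_eq_mul, ← rpow_mul hu0.le,
      mul_sub, mul_inv_cancel₀ hp.ne', mul_one]
    have : u ^ (p - 1) * u ^ (1 - p) = 1 := by
      rw [← rpow_add hu0, sub_add_sub_cancel', sub_self, rpow_zero]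
    linear_combination p * (1 - u ^ p) ^ (b - 1) * this
  rw [image_rpow_Ioo_zero_one hp, setIntegral_congr_fun measurableSet_Ioo hintegrand,
    integral_const_mul, ← integral_Ioc_eq_integral_Ioo, ← integral_Ioc_eq_integral_Ioo,
    ← intervalIntegral.integral_of_le zero_le_one, ← intervalIntegral.integral_of_le zero_le_one,
    integral_rpow_mul_one_sub_rpow (inv_pos.2 hp) hb] at hsubst
  rw [Gamma_add_one (inv_ne_zero hp.ne'), mul_assoc, mul_div_assoc, hsubst,
    inv_mul_cancel_left₀ hp.ne']

theorem integral_rpow_sub_rpow_rpow {p c : ℝ} (q : ℝ) (hp : 0 ≤ p) (hc : 0 < c) :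
    ∫ y in (0:ℝ)..c, (c ^ p - y ^ p) ^ q = c ^ (p * q + 1) * ∫ u in (0:ℝ)..1, (1 - u ^ p) ^ q := by
  have hscale := intervalIntegral.integral_comp_mul_left (a := 0) (b := 1)
    (fun y => (c ^ p - y ^ p) ^ q) hc.ne'
  rw [mul_zero, mul_one] at hscale
  rw [(inv_smul_eq_iff₀ hc.ne').1 hscale.symm, smul_eq_mul, ← intervalIntegral.integral_const_mul,
    ← intervalIntegral.integral_const_mul]
  refine intervalIntegral.integral_congr fun u hu => ?_
  rw [uIcc_of_le zero_le_one] at hu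
  have h1 : 0 ≤ 1 - u ^ p := sub_nonneg.2 (rpow_le_one hu.1 hu.2 hp)
  rw [mul_rpow hc.le hu.1, ← mul_one_sub, mul_rpow (by positivity) h1, ← rpow_mul hc.le,
    rpow_add_one hc.ne']
  ring

theorem intervalIntegral.integral_ite_lt {E : Type*} [NormedAddCommGroup E] [NormedSpace ℝ E]
    {a b c : ℝ} (f : ℝ → E) (hac : a ≤ c) (hcb : c ≤ b) :
    ∫ y in a..b, (if y < c then f y else 0) = ∫ y in a..c, f y := by
  rw [intervalIntegral.integral_of_le (hac.trans hcb), intervalIntegral.integral_of_le hac,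
    integral_Ioc_eq_integral_Ioo (x := a) (y := c)]
  have hsupport : Ioc a b ∩ Iio c = Ioo a c := by
    ext y
    simp only [mem_inter_iff, mem_Ioc, mem_Iio, mem_Ioo]
    exact ⟨fun h => ⟨h.1.1, h.2⟩, fun h => ⟨⟨h.1, h.2.le.trans hcb⟩, h.2⟩⟩
  rw [← hsupport, ← setIntegral_indicator measurableSet_Iio]
  rfl

/-- The bivariate positive L_p-norm spherical copula density has uniform marginals:
for every x ∈ (0,1), ∫_0^1 c⁺(x,y) dy = 1. -/
theorem bivariate_lp_copula_uniform_marginals (p : ℝ) (hp : 1 < p) :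
    ∀ x ∈ Ioo (0:ℝ) 1,
      (∫ y in (0:ℝ)..1,
        (if x ^ p + y ^ p < 1 then
          (Real.Gamma (1 - 1/p) * Real.Gamma (1 + 1/p))⁻¹ *
            (1 - x ^ p - y ^ p) ^ (-(1/p))
        else 0)) = 1 := by
  intro x hx
  have hp0 : 0 < p := zero_lt_one.trans hp
  set K := (Gamma (1 - 1/p) * Gamma (1 + 1/p))⁻¹
  set c := (1 - x ^ p) ^ p⁻¹
  have hxp : x ^ p < 1 := rpow_lt_one hx.1.le hx.2 hp0
  have hcp : c ^ p = 1 - x ^ p := rpow_inv_rpow (by linarith) hp0.ne'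
  have hc0 : 0 < c := rpow_pos_of_pos (by linarith) _
  have hc1 : c ≤ 1 := rpow_le_one (by linarith) (by linarith [rpow_pos_of_pos hx.1 p]) (by positivity)
  have hdensity : EqOn
      (fun y => if x ^ p + y ^ p < 1 then K * (1 - x ^ p - y ^ p) ^ (-(1/p)) else 0)
      (fun y => if y < c then K * (c ^ p - y ^ p) ^ (-(1/p)) else 0) (uIcc 0 1) := by
    intro y hy
    rw [uIcc_of_le zero_le_one] at hy
    have hcond : x ^ p + y ^ p < 1 ↔ y < c := by
      rw [← rpow_lt_rpow_iff hy.1 hc0.le hp0, hcp]; constructor <;> intro <;> linarith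
    simp only [hcond, hcp, sub_sub]
  have hb : 0 < 1 - 1/p := by rw [sub_pos, div_lt_one hp0]; exact hp
  rw [intervalIntegral.integral_congr hdensity, intervalIntegral.integral_ite_lt _ hc0.le hc1,
    intervalIntegral.integral_const_mul, integral_rpow_sub_rpow_rpow _ hp0.le hc0,
    show p * -(1/p) + 1 = 0 by field_simp; ring, rpow_zero, one_mul,
    show -(1/p) = 1 - 1/p - 1 by ring, integral_one_sub_rpow_rpow hp0 hb, ← one_div, add_sub_cancel,
    Gamma_one, div_one, add_comm (1/p) 1, mul_comm (Gamma _)]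
  exact inv_mul_cancel₀ (mul_pos (Gamma_pos_of_pos hb) (Gamma_pos_of_pos (by positivity))).ne'
end

section
/- For all x ∈ (0,1), 4ψ(2x) - ψ(x) - 3ψ(3x) < 0, where ψ is the digamma function. -/
open Real Set

/-- The digamma function ψ = Γ'/Γ. -/
noncomputable def digamma (x : ℝ) : ℝ := deriv Real.Gamma x / Real.Gamma x

/-!
Differentiating Euler's limit formula for `log Γ` termwise gives, for `x > 0`,
`ψ(x) + 1/x = ∑_{k ≥ 1} (log (1 + 1/k) - 1/(k + x))`.
In `4ψ(2x) - ψ(x) - 3ψ(3x)` the logarithms and the `1/x` terms cancel (`4 - 1 - 3 = 0` and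
`4/2 - 1 - 3/3 = 0`), leaving `∑_{k ≥ 1} (1/(k + x) + 3/(k + 3x) - 4/(k + 2x))`, whose terms equal
`-2kx / ((k + x)(k + 2x)(k + 3x)) < 0`.
-/

noncomputable def logGammaTerm (m : ℕ) (x : ℝ) : ℝ :=
  x * log (1 + 1 / (m + 1)) - log (1 + x / (m + 1))

noncomputable def digammaTerm (m : ℕ) (x : ℝ) : ℝ :=
  log (1 + 1 / (m + 1)) - 1 / (m + 1 + x)

lemma logGammaTerm_one (m : ℕ) : logGammaTerm m 1 = 0 := by
  simp [logGammaTerm]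

lemma hasDerivAt_logGammaTerm (m : ℕ) {x : ℝ} (hx : x ≠ -(m + 1)) :
    HasDerivAt (logGammaTerm m) (digammaTerm m x) x := by
  have hk : (m : ℝ) + 1 ≠ 0 := by positivity
  have hmx : (m : ℝ) + 1 + x ≠ 0 := fun h => hx (by linarith)
  have h1 : 1 + x / (m + 1) ≠ 0 := by
    rw [show 1 + x / (m + 1) = (m + 1 + x) / (m + 1) by field_simp]
    exact div_ne_zero hmx hk
  have := ((hasDerivAt_id' x).mul_const (log (1 + 1 / (m + 1)))).sub
    ((((hasDerivAt_id' x).div_const ((m : ℝ) + 1)).const_add 1).log h1)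
  refine this.congr_deriv ?_
  rw [digammaTerm]
  field_simp

lemma inv_add_one_le_log_one_add_inv {k : ℝ} (hk : 0 < k) :
    1 / (k + 1) ≤ log (1 + 1 / k) := by
  have := one_sub_inv_le_log_of_pos (by positivity : 0 < 1 + 1 / k)
  convert this using 1
  field_simp
  ring

lemma log_one_add_inv_le_inv {k : ℝ} (hk : 0 < k) : log (1 + 1 / k) ≤ 1 / k := by
  linarith [log_le_sub_one_of_pos (by positivity : 0 < 1 + 1 / k)]

lemma abs_digammaTerm_le (m : ℕ) {x b : ℝ} (hx : 0 ≤ x) (hxb : x ≤ b) :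
    |digammaTerm m x| ≤ (b + 1) / ((m : ℝ) + 1) ^ 2 := by
  set k : ℝ := m + 1
  have hk : 0 < k := by positivity
  have hb : 0 ≤ b := hx.trans hxb
  have hlow := inv_add_one_le_log_one_add_inv hk
  have hupp := log_one_add_inv_le_inv hk
  have hxk : 1 / (k + b) ≤ 1 / (k + x) := by gcongr
  have hxk' : 1 / (k + x) ≤ 1 / k := by gcongr; linarith
  have hb1 : 1 / k - 1 / (k + b) ≤ (b + 1) / k ^ 2 := by
    rw [div_sub_div _ _ hk.ne' (by positivity), div_le_div_iff₀ (by positivity) (by positivity)]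
    nlinarith [mul_nonneg hb hk.le, sq_nonneg k]
  have hb2 : 1 / k - 1 / (k + 1) ≤ (b + 1) / k ^ 2 := by
    rw [div_sub_div _ _ hk.ne' (by positivity), div_le_div_iff₀ (by positivity) (by positivity)]
    nlinarith [mul_nonneg hb hk.le, sq_nonneg k]
  rw [digammaTerm, abs_le]
  constructor <;> linarith

lemma summable_div_nat_add_one_sq (b : ℝ) :
    Summable (fun m : ℕ => (b + 1) / ((m : ℝ) + 1) ^ 2) := by
  have := (summable_nat_add_iff 1).mpr (summable_one_div_nat_pow.mpr one_lt_two)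
  refine (this.mul_left (b + 1)).congr fun m => ?_
  push_cast
  ring

lemma sum_range_logGammaTerm {x : ℝ} (hx : 0 < x) (n : ℕ) :
    ∑ m ∈ Finset.range n, logGammaTerm m x
      = BohrMollerup.logGammaSeq x n + log x + x * (log (n + 1) - log n) := by
  induction n with
  | zero => simp [BohrMollerup.logGammaSeq]
  | succ n ih =>
    have hk : (0 : ℝ) < n + 1 := by positivity
    rw [Finset.sum_range_succ, ih, logGammaTerm, BohrMollerup.logGammaSeq,
      BohrMollerup.logGammaSeq, Finset.sum_range_succ _ (n + 1), Nat.factorial_succ,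
      Nat.cast_mul, log_mul (by positivity) (by positivity),
      show 1 + 1 / ((n : ℝ) + 1) = (n + 1 + 1) / (n + 1) by field_simp,
      show 1 + x / ((n : ℝ) + 1) = (x + (n + 1)) / (n + 1) by field_simp; ring,
      log_div (by positivity) hk.ne', log_div (by positivity) hk.ne']
    push_cast
    ring

/- The series vanishes at `1`, and its derivative series is uniformly summable on `(0, x + 1)`. -/
lemma summable_logGammaTerm {x : ℝ} (hx : 0 < x) : Summable (fun m => logGammaTerm m x) :=
  summable_of_summable_hasDerivAt_of_isPreconnected (summable_div_nat_add_one_sq (x + 1))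
    isOpen_Ioo isPreconnected_Ioo
    (fun m y hy => hasDerivAt_logGammaTerm m
      (by linarith [hy.1, (m.cast_nonneg : (0 : ℝ) ≤ m)] : -((m : ℝ) + 1) < y).ne')
    (fun m y hy => (Real.norm_eq_abs _).trans_le (abs_digammaTerm_le m hy.1.le hy.2.le))
    (show (1 : ℝ) ∈ Ioo 0 (x + 1) from ⟨one_pos, by linarith⟩)
    (by simp [logGammaTerm_one])
    (show x ∈ Ioo 0 (x + 1) from ⟨hx, lt_add_one x⟩)

lemma hasSum_logGammaTerm {x : ℝ} (hx : 0 < x) :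
    HasSum (fun m => logGammaTerm m x) (log (Gamma x) + log x) := by
  refine (summable_logGammaTerm hx).hasSum_iff_tendsto_nat.mpr ?_
  simp_rw [sum_range_logGammaTerm hx]
  simpa using ((BohrMollerup.tendsto_log_gamma hx).add_const (log x)).add
    (tendsto_log_nat_add_one_sub_log.const_mul x)

lemma hasDerivAt_log_Gamma {x : ℝ} (hx : 0 < x) :
    HasDerivAt (fun y => log (Gamma y)) (digamma x) x := by
  have hΓ : HasDerivAt Gamma (deriv Gamma x) x :=
    (differentiableAt_Gamma fun m => by linarith [(m.cast_nonneg : (0 : ℝ) ≤ m)]).hasDerivAt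
  exact hΓ.log (Gamma_pos_of_pos hx).ne'

theorem hasSum_digammaTerm {x : ℝ} (hx : 0 < x) :
    HasSum (fun m => digammaTerm m x) (digamma x + x⁻¹) := by
  have hxt : x ∈ Ioo 0 (x + 1) := ⟨hx, lt_add_one x⟩
  have hseries : HasDerivAt (fun y => ∑' m, logGammaTerm m y) (∑' m, digammaTerm m x) x :=
    hasDerivAt_tsum_of_isPreconnected (summable_div_nat_add_one_sq (x + 1)) isOpen_Ioo
      isPreconnected_Ioo
      (fun m y hy => hasDerivAt_logGammaTerm m
        (by linarith [hy.1, (m.cast_nonneg : (0 : ℝ) ≤ m)] : -((m : ℝ) + 1) < y).ne')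
      (fun m y hy => (Real.norm_eq_abs _).trans_le (abs_digammaTerm_le m hy.1.le hy.2.le))
      hxt (summable_logGammaTerm hx) hxt
  have hlog : HasDerivAt (fun y => ∑' m, logGammaTerm m y) (digamma x + x⁻¹) x := by
    refine ((hasDerivAt_log_Gamma hx).add (hasDerivAt_log hx.ne')).congr_of_eventuallyEq ?_
    filter_upwards [Ioi_mem_nhds hx] with y hy using (hasSum_logGammaTerm hy).tsum_eq
  rw [← hseries.unique hlog]
  exact (Summable.of_norm_bounded (summable_div_nat_add_one_sq x)
    fun m => (Real.norm_eq_abs _).trans_le (abs_digammaTerm_le m hx.le le_rfl)).hasSum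

lemma digammaTerm_combination_neg (m : ℕ) {x : ℝ} (hx : 0 < x) :
    4 * digammaTerm m (2 * x) - digammaTerm m x - 3 * digammaTerm m (3 * x) < 0 := by
  have : 4 * digammaTerm m (2 * x) - digammaTerm m x - 3 * digammaTerm m (3 * x)
      = -(2 * (m + 1) * x / ((m + 1 + x) * (m + 1 + 2 * x) * (m + 1 + 3 * x))) := by
    simp only [digammaTerm]
    field_simp
    ring
  rw [this, neg_lt_zero]
  positivity

/-- For all x ∈ (0,1), 4ψ(2x) - ψ(x) - 3ψ(3x) < 0. -/
theorem digamma_combination_neg :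
    ∀ x ∈ Ioo (0:ℝ) 1, 4 * digamma (2*x) - digamma x - 3 * digamma (3*x) < 0 := by
  rintro x ⟨hx, -⟩
  have hsum := (((hasSum_digammaTerm (by positivity : 0 < 2 * x)).mul_left 4).sub
    (hasSum_digammaTerm hx)).sub ((hasSum_digammaTerm (by positivity : 0 < 3 * x)).mul_left 3)
  have hneg := hasSum_lt (fun m => (digammaTerm_combination_neg m hx).le)
    (digammaTerm_combination_neg 0 hx) hsum hasSum_zero
  have hinv : 4 * (2 * x)⁻¹ - x⁻¹ - 3 * (3 * x)⁻¹ = 0 := by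
    field_simp
    ring
  linarith
end

section
/- Let n ≥ 2 and p > n-1. If R^p ~ Beta(n/p, 1-(n-1)/p) and U^p ~ Beta(1/p, (n-1)/p) are independent, then R·U ~ U(0,1). -/
open MeasureTheory Set Real

/-- The Beta(a,b) distribution as a measure on ℝ. -/
noncomputable def betaMeasure (a b : ℝ) : Measure ℝ :=
  (volume.restrict (Ioo (0:ℝ) 1)).withDensity fun x =>
    ENNReal.ofReal (Real.Gamma (a + b) / (Real.Gamma a * Real.Gamma b) *
      x ^ (a - 1) * (1 - x) ^ (b - 1))

/-!
With `α = 1/p`, `β = (n-1)/p` and `γ = 1 - (n-1)/p` we have `U^p ~ Beta(α, β)` and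
`R^p ~ Beta(α + β, γ)`. The moments `m_s(Beta(α, β)) = B(α + s, β) / B(α, β)` satisfy
`m_s(Beta(α, β)) · m_s(Beta(α + β, γ)) = m_s(Beta(α, β + γ))`, because the Gamma factors
telescope; by independence `(UR)^p ~ Beta(α, β + γ) = Beta(1/p, 1)`. For `W ≥ 0` with
`W^p ~ Beta(1/p, 1)` this gives `E[W^k] = 1/(k+1)`, the moments of `U(0,1)`. All these laws live
on `[0,1]`, where Weierstrass approximation makes a finite measure determined by its moments.
-/

section MomentDeterminacy

variable {a b : ℝ} {ν ν₁ ν₂ : Measure ℝ}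

lemma integrable_of_ae_mem_Icc [IsFiniteMeasure ν] (hν : ∀ᵐ x ∂ν, x ∈ Icc a b) {f : ℝ → ℝ}
    (hf : Continuous f) : Integrable f ν := by
  rw [← Measure.restrict_eq_self_of_ae_mem hν]
  exact hf.integrableOn_Icc

lemma integral_eval_eq_of_integral_pow_eq [IsFiniteMeasure ν₁] [IsFiniteMeasure ν₂]
    (h₁ : ∀ᵐ x ∂ν₁, x ∈ Icc a b) (h₂ : ∀ᵐ x ∂ν₂, x ∈ Icc a b)
    (hmom : ∀ k : ℕ, ∫ x, x ^ k ∂ν₁ = ∫ x, x ^ k ∂ν₂) (q : Polynomial ℝ) :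
    ∫ x, q.eval x ∂ν₁ = ∫ x, q.eval x ∂ν₂ := by
  simp_rw [q.eval_eq_sum_range]
  rw [integral_finsetSum _ fun i _ =>
      (integrable_of_ae_mem_Icc h₁ (continuous_pow i)).const_mul _,
    integral_finsetSum _ fun i _ =>
      (integrable_of_ae_mem_Icc h₂ (continuous_pow i)).const_mul _]
  simp_rw [integral_const_mul, hmom]

lemma abs_integral_sub_integral_le [IsFiniteMeasure ν] (hν : ∀ᵐ x ∂ν, x ∈ Icc a b)
    {f g : ℝ → ℝ} (hf : Continuous f) (hg : Continuous g) {ε : ℝ}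
    (hfg : ∀ x ∈ Icc a b, |f x - g x| ≤ ε) :
    |∫ x, f x ∂ν - ∫ x, g x ∂ν| ≤ ε * ν.real univ := by
  rw [← integral_sub (integrable_of_ae_mem_Icc hν hf) (integrable_of_ae_mem_Icc hν hg),
    ← Real.norm_eq_abs]
  refine norm_integral_le_of_norm_le_const ?_
  filter_upwards [hν] with x hx
  exact hfg x hx

theorem ext_of_forall_integral_pow_eq [IsFiniteMeasure ν₁] [IsFiniteMeasure ν₂]
    (h₁ : ∀ᵐ x ∂ν₁, x ∈ Icc a b) (h₂ : ∀ᵐ x ∂ν₂, x ∈ Icc a b)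
    (hmom : ∀ k : ℕ, ∫ x, x ^ k ∂ν₁ = ∫ x, x ^ k ∂ν₂) : ν₁ = ν₂ := by
  refine ext_of_forall_integral_eq_of_IsFiniteMeasure fun f =>
    eq_of_forall_dist_le fun δ hδ => ?_
  set C := ν₁.real univ + ν₂.real univ + 1
  have hC : 0 < C := by positivity
  obtain ⟨q, hq⟩ := exists_polynomial_near_of_continuousOn a b f f.continuous.continuousOn
    (δ / C) (div_pos hδ hC)
  have hfq : ∀ x ∈ Icc a b, |f x - q.eval x| ≤ δ / C := fun x hx => by
    rw [abs_sub_comm]; exact (hq x hx).le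
  have d₁ := abs_integral_sub_integral_le h₁ f.continuous q.continuous hfq
  have d₂ := abs_integral_sub_integral_le h₂ f.continuous q.continuous hfq
  rw [integral_eval_eq_of_integral_pow_eq h₁ h₂ hmom q] at d₁
  calc dist (∫ x, f x ∂ν₁) (∫ x, f x ∂ν₂)
      ≤ |∫ x, f x ∂ν₁ - ∫ x, q.eval x ∂ν₂| + |∫ x, f x ∂ν₂ - ∫ x, q.eval x ∂ν₂| := by
        rw [Real.dist_eq, abs_sub_comm (∫ x, f x ∂ν₂)]
        exact abs_sub_le _ (∫ x, q.eval x ∂ν₂) _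
    _ ≤ δ / C * ν₁.real univ + δ / C * ν₂.real univ := add_le_add d₁ d₂
    _ ≤ δ := by
        rw [← mul_add, div_mul_eq_mul_div, div_le_iff₀ hC]
        exact mul_le_mul_of_nonneg_left (by linarith) hδ.le

end MomentDeterminacy

open ProbabilityTheory (beta)

lemma integral_rpow_mul_one_sub_rpow_s14 {u v : ℝ} (hu : 0 < u) (hv : 0 < v) :
    ∫ x in (0:ℝ)..1, x ^ (u - 1) * (1 - x) ^ (v - 1) = beta u v := by
  have hcast : ((∫ x in (0:ℝ)..1, x ^ (u - 1) * (1 - x) ^ (v - 1) : ℝ) : ℂ) =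
      Complex.betaIntegral u v := by
    rw [Complex.betaIntegral, ← intervalIntegral.integral_ofReal]
    refine intervalIntegral.integral_congr_ae (ae_of_all _ fun x hx => ?_)
    rw [uIoc_of_le zero_le_one] at hx
    push_cast
    rw [Complex.ofReal_cpow hx.1.le, Complex.ofReal_cpow (sub_nonneg.2 hx.2)]
    push_cast
    ring
  rw [ProbabilityTheory.beta_eq_betaIntegralReal u v hu hv, ← hcast, Complex.ofReal_re]

lemma beta_one_right {x : ℝ} (hx : 0 < x) : beta x 1 = x⁻¹ := by
  rw [ProbabilityTheory.beta, Real.Gamma_one, Real.Gamma_add_one hx.ne']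
  field_simp [(Real.Gamma_pos_of_pos hx).ne']

lemma ae_mem_Ioo_betaMeasure (a b : ℝ) : ∀ᵐ x ∂betaMeasure a b, x ∈ Ioo (0:ℝ) 1 :=
  (withDensity_absolutelyContinuous _ _).ae_le (ae_restrict_mem measurableSet_Ioo)

noncomputable def betaMoment (α β s : ℝ) : ℝ := beta (α + s) β / beta α β

lemma integral_rpow_betaMeasure {a b s : ℝ} (ha : 0 < a) (hb : 0 < b) (has : 0 < a + s) :
    ∫ x, x ^ s ∂betaMeasure a b = betaMoment a b s := by
  have hdensity : Gamma (a + b) / (Gamma a * Gamma b) = (beta a b)⁻¹ := by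
    rw [ProbabilityTheory.beta, inv_div]
  rw [betaMeasure, integral_withDensity_eq_integral_toReal_smul (by fun_prop)
    (ae_of_all _ fun _ => ENNReal.ofReal_lt_top)]
  calc ∫ x in Ioo (0:ℝ) 1, (ENNReal.ofReal (Gamma (a + b) / (Gamma a * Gamma b) *
          x ^ (a - 1) * (1 - x) ^ (b - 1))).toReal • x ^ s
      = ∫ x in Ioo (0:ℝ) 1, (beta a b)⁻¹ * (x ^ (a + s - 1) * (1 - x) ^ (b - 1)) := by
        refine setIntegral_congr_fun measurableSet_Ioo fun x hx => ?_
        have hβ := ProbabilityTheory.beta_pos ha hb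
        have h1x : 0 < 1 - x := sub_pos.2 hx.2
        rw [hdensity, ENNReal.toReal_ofReal (by have := hx.1; positivity), smul_eq_mul,
          show a + s - 1 = (a - 1) + s by ring, Real.rpow_add hx.1]
        ring
    _ = betaMoment a b s := by
        rw [integral_const_mul, ← integral_Ioc_eq_integral_Ioo,
          ← intervalIntegral.integral_of_le zero_le_one, integral_rpow_mul_one_sub_rpow_s14 has hb,
          betaMoment, inv_mul_eq_div]

lemma isProbabilityMeasure_betaMeasure {a b : ℝ} (ha : 0 < a) (hb : 0 < b) :
    IsProbabilityMeasure (betaMeasure a b) := by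
  have h := integral_rpow_betaMeasure (s := 0) ha hb (by simpa using ha)
  rw [integral_congr_ae (ae_of_all _ fun x => rpow_zero x), integral_const, smul_eq_mul,
    mul_one, betaMoment, add_zero, div_self (ProbabilityTheory.beta_pos ha hb).ne'] at h
  exact ⟨(ENNReal.toReal_eq_one_iff _).1 h⟩

lemma betaMoment_eq_Gamma {α β s : ℝ} (hβ : 0 < β) :
    betaMoment α β s = Gamma (α + s) * Gamma (α + β) / (Gamma α * Gamma (α + β + s)) := by
  have := (Gamma_pos_of_pos hβ).ne'
  rw [betaMoment, ProbabilityTheory.beta, ProbabilityTheory.beta, add_right_comm α s β]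
  field_simp

lemma betaMoment_mul_betaMoment {α β γ s : ℝ} (hα : 0 < α) (hβ : 0 < β) (hγ : 0 < γ)
    (hs : 0 < α + s) :
    betaMoment α β s * betaMoment (α + β) γ s = betaMoment α (β + γ) s := by
  rw [betaMoment_eq_Gamma hβ, betaMoment_eq_Gamma hγ, betaMoment_eq_Gamma (add_pos hβ hγ),
    add_right_comm α β s, ← add_assoc]
  have := (Gamma_pos_of_pos (add_pos hα hβ)).ne'
  have := (Gamma_pos_of_pos (by linarith : 0 < α + s + β)).ne'
  field_simp

lemma betaMoment_one_right {α s : ℝ} (hα : 0 < α) (hs : 0 < α + s) :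
    betaMoment α 1 s = α / (α + s) := by
  rw [betaMoment, beta_one_right hs, beta_one_right hα, inv_div_inv]

lemma integral_pow_uniform (k : ℕ) :
    ∫ x in Ioo (0:ℝ) 1, x ^ k = ((k : ℝ) + 1)⁻¹ := by
  rw [← integral_Ioc_eq_integral_Ioo, ← intervalIntegral.integral_of_le zero_le_one,
    integral_pow]
  simp

section PowerBeta

variable {Ω : Type*} [MeasurableSpace Ω] {μ : Measure Ω} {p a b : ℝ}

lemma ae_mem_Icc_of_map_rpow_eq_betaMeasure {Z : Ω → ℝ} (hZ : Measurable Z)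
    (hZ0 : ∀ᵐ ω ∂μ, 0 ≤ Z ω) (hp : 0 < p) (hmap : μ.map (fun ω => Z ω ^ p) = betaMeasure a b) :
    ∀ᵐ ω ∂μ, Z ω ∈ Icc (0:ℝ) 1 := by
  have hZp : ∀ᵐ ω ∂μ, Z ω ^ p ∈ Ioo (0:ℝ) 1 := by
    refine ae_of_ae_map (by fun_prop) ?_
    rw [hmap]
    exact ae_mem_Ioo_betaMeasure a b
  filter_upwards [hZ0, hZp] with ω h0 h1
  refine ⟨h0, (rpow_le_rpow_iff h0 zero_le_one hp).1 ?_⟩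
  rw [one_rpow]
  exact h1.2.le

lemma integral_rpow_of_map_rpow_eq_betaMeasure {Z : Ω → ℝ} (hZ : Measurable Z)
    (hZ0 : ∀ᵐ ω ∂μ, 0 ≤ Z ω) (hp : 0 < p) (ha : 0 < a) (hb : 0 < b)
    (hmap : μ.map (fun ω => Z ω ^ p) = betaMeasure a b) {s : ℝ} (has : 0 < a + s / p) :
    ∫ ω, Z ω ^ s ∂μ = betaMoment a b (s / p) := by
  have hpow : ∀ᵐ ω ∂μ, Z ω ^ s = (Z ω ^ p) ^ (s / p) := by
    filter_upwards [hZ0] with ω h0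
    rw [← rpow_mul h0, mul_div_cancel₀ _ hp.ne']
  rw [integral_congr_ae hpow,
    ← integral_map (φ := fun ω => Z ω ^ p) (f := fun x => x ^ (s / p)) (by fun_prop) (by fun_prop),
    hmap, integral_rpow_betaMeasure ha hb has]

lemma map_rpow_mul_eq_betaMeasure [IsFiniteMeasure μ] {X Y : Ω → ℝ}
    (hX : Measurable X) (hY : Measurable Y) (hX0 : ∀ᵐ ω ∂μ, 0 ≤ X ω) (hY0 : ∀ᵐ ω ∂μ, 0 ≤ Y ω)
    (hXY : ProbabilityTheory.IndepFun X Y μ) {α β γ : ℝ} (hp : 0 < p)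
    (hα : 0 < α) (hβ : 0 < β) (hγ : 0 < γ)
    (hXmap : μ.map (fun ω => X ω ^ p) = betaMeasure α β)
    (hYmap : μ.map (fun ω => Y ω ^ p) = betaMeasure (α + β) γ) :
    μ.map (fun ω => (X ω * Y ω) ^ p) = betaMeasure α (β + γ) := by
  have := isProbabilityMeasure_betaMeasure hα (add_pos hβ hγ)
  have hX01 := ae_mem_Icc_of_map_rpow_eq_betaMeasure hX hX0 hp hXmap
  have hY01 := ae_mem_Icc_of_map_rpow_eq_betaMeasure hY hY0 hp hYmap
  refine ext_of_forall_integral_pow_eq (a := 0) (b := 1) ?_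
    ((ae_mem_Ioo_betaMeasure _ _).mono fun x hx => Ioo_subset_Icc_self hx) fun k => ?_
  · refine (ae_map_iff (by fun_prop) measurableSet_Icc).2 ?_
    filter_upwards [hX01, hY01] with ω hx hy
    have hxy : X ω * Y ω ∈ Icc (0:ℝ) 1 :=
      ⟨mul_nonneg hx.1 hy.1, mul_le_one₀ hx.2 hy.1 hy.2⟩
    exact ⟨rpow_nonneg hxy.1 p, rpow_le_one hxy.1 hxy.2 hp.le⟩
  have hpow : ∀ᵐ ω ∂μ, ((X ω * Y ω) ^ p) ^ k = X ω ^ (p * k) * Y ω ^ (p * k) := by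
    filter_upwards [hX0, hY0] with ω hx hy
    rw [← rpow_natCast, ← rpow_mul (mul_nonneg hx hy), mul_rpow hx hy]
  have hpk : (p * k) / p = k := by field_simp
  rw [integral_map (by fun_prop) (by fun_prop), integral_congr_ae hpow,
    hXY.integral_fun_comp_mul_comp (f := (· ^ (p * k))) (g := (· ^ (p * k)))
      hX.aemeasurable hY.aemeasurable (by fun_prop) (by fun_prop),
    integral_rpow_of_map_rpow_eq_betaMeasure hX hX0 hp hα hβ hXmap (by rw [hpk]; positivity),
    integral_rpow_of_map_rpow_eq_betaMeasure hY hY0 hp (add_pos hα hβ) hγ hYmap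
      (by rw [hpk]; positivity),
    hpk, betaMoment_mul_betaMoment hα hβ hγ (by positivity)]
  simp_rw [← rpow_natCast]
  exact (integral_rpow_betaMeasure hα (add_pos hβ hγ) (by positivity)).symm

lemma map_eq_uniform_of_map_rpow_eq_betaMeasure_one [IsFiniteMeasure μ] {W : Ω → ℝ}
    (hW : Measurable W) (hW0 : ∀ᵐ ω ∂μ, 0 ≤ W ω) (hp : 0 < p)
    (hmap : μ.map (fun ω => W ω ^ p) = betaMeasure p⁻¹ 1) :
    μ.map W = volume.restrict (Ioo (0:ℝ) 1) := by
  have hα : 0 < p⁻¹ := inv_pos.2 hp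
  refine ext_of_forall_integral_pow_eq (a := 0) (b := 1)
    ((ae_map_iff hW.aemeasurable measurableSet_Icc).2
      (ae_mem_Icc_of_map_rpow_eq_betaMeasure hW hW0 hp hmap))
    (ae_restrict_of_forall_mem measurableSet_Ioo fun x hx => Ioo_subset_Icc_self hx) fun k => ?_
  have hk : 0 < p⁻¹ + k / p := by positivity
  rw [integral_map hW.aemeasurable (by fun_prop), integral_pow_uniform]
  simp_rw [← rpow_natCast]
  rw [integral_rpow_of_map_rpow_eq_betaMeasure hW hW0 hp hα one_pos hmap hk,
    betaMoment_one_right hα hk]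
  field_simp
  ring

end PowerBeta

/-- Sufficiency: if n ≥ 2, p > n-1, R^p ~ Beta(n/p, 1-(n-1)/p) and
U^p ~ Beta(1/p,(n-1)/p) are independent (R, U ≥ 0), then R·U ~ U(0,1). -/
theorem lp_copula_sufficient_condition
    {Ω : Type*} [MeasurableSpace Ω] (μ : Measure Ω) [IsProbabilityMeasure μ]
    (n : ℕ) (hn : 2 ≤ n) (p : ℝ) (hp : (n : ℝ) - 1 < p)
    (R U : Ω → ℝ) (hR : Measurable R) (hU : Measurable U)
    (hRpos : ∀ᵐ ω ∂μ, 0 ≤ R ω) (hUpos : ∀ᵐ ω ∂μ, 0 ≤ U ω)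
    (hindep : ProbabilityTheory.IndepFun R U μ)
    (hRmap : Measure.map (fun ω => (R ω) ^ p) μ = betaMeasure (n/p) (1 - (n - 1)/p))
    (hUmap : Measure.map (fun ω => (U ω) ^ p) μ = betaMeasure (1/p) ((n - 1)/p)) :
    Measure.map (fun ω => R ω * U ω) μ = volume.restrict (Ioo (0:ℝ) 1) := by
  have hn1 : (1 : ℝ) ≤ n - 1 := by
    have : (2 : ℝ) ≤ n := by exact_mod_cast hn
    linarith
  have hp0 : 0 < p := by linarith
  have hβ : 0 < ((n : ℝ) - 1) / p := div_pos (by linarith) hp0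
  have hγ : 0 < 1 - ((n : ℝ) - 1) / p := by rwa [sub_pos, div_lt_one hp0]
  rw [show (n : ℝ) / p = 1 / p + (n - 1) / p by ring] at hRmap
  have hRUmap := map_rpow_mul_eq_betaMeasure hU hR hUpos hRpos hindep.symm hp0
    (by positivity) hβ hγ hUmap hRmap
  rw [add_sub_cancel, one_div] at hRUmap
  simp_rw [mul_comm (U _)] at hRUmap
  exact map_eq_uniform_of_map_rpow_eq_betaMeasure_one (hR.mul hU)
    (by filter_upwards [hRpos, hUpos] with ω hr hu; exact mul_nonneg hr hu) hp0 hRUmap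
end

section
/- Let U₁,...,Uₙ be i.i.d. U(0,1) random variables, M = max{U₁,...,Uₙ}, and Vᵢ = Uᵢ/M. Then for each i, P(Vᵢ = 1) = 1/n, and conditional on Vᵢ < 1, Vᵢ is uniform on (0,1); i.e., the law of Vᵢ is (1/n)δ₁ + ((n-1)/n)·U(0,1). -/
/-! Transport everything to the product of `n = m + 1` copies of `U(0,1)`. Writing `M'` for
the maximum of the coordinates other than `i`, almost surely `Uᵢ / M ≤ t ↔ Uᵢ ≤ t M'` for
`t < 1`; integrating out the independent uniform `Uᵢ` gives `P(Vᵢ ≤ t) = t · E M' = t m / (m + 1)`,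
where `E M' = ∫₀¹ (1 - uᵐ) du` by the layer-cake formula. Since also `Vᵢ ≤ 1`, these are the
values of the distribution function of `(1/n) δ₁ + ((n-1)/n) U(0,1)`. -/

open MeasureTheory Set Real ProbabilityTheory ENNReal

instance isProbabilityMeasure_restrict_Ioo_zero_one :
    IsProbabilityMeasure (volume.restrict (Ioo (0 : ℝ) 1)) :=
  ⟨by simp [Real.volume_Ioo]⟩

lemma restrict_Ioo_zero_one_Iic (a : ℝ) :
    volume.restrict (Ioo (0 : ℝ) 1) (Iic a) = ENNReal.ofReal (min a 1) := by
  rw [Measure.restrict_apply measurableSet_Iic]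
  refine le_antisymm ?_ ?_
  · calc volume (Iic a ∩ Ioo 0 1) ≤ volume (Ioc 0 (min a 1)) :=
          measure_mono fun x hx => ⟨hx.2.1, le_min hx.1 hx.2.2.le⟩
      _ = ENNReal.ofReal (min a 1) := by rw [Real.volume_Ioc, sub_zero]
  · calc ENNReal.ofReal (min a 1) = volume (Ioo 0 (min a 1)) := by rw [Real.volume_Ioo, sub_zero]
      _ ≤ volume (Iic a ∩ Ioo 0 1) := measure_mono fun x hx =>
          ⟨(hx.2.trans_le (min_le_left a 1)).le, hx.1, hx.2.trans_le (min_le_right a 1)⟩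

lemma ae_pi_restrict_forall_mem {ι : Type*} [Fintype ι] {α : ι → Type*}
    [∀ i, MeasurableSpace (α i)] (μ : ∀ i, Measure (α i)) {s : ∀ i, Set (α i)}
    [∀ i, SigmaFinite ((μ i).restrict (s i))] (hs : ∀ i, MeasurableSet (s i)) :
    ∀ᵐ x ∂Measure.pi (fun i => (μ i).restrict (s i)), ∀ i, x i ∈ s i :=
  ae_all_iff.2 fun i => Measure.tendsto_eval_ae_ae.eventually (ae_restrict_mem (hs i))

lemma iSup_mem_Icc_of_forall_mem_Ioo {ι : Type*} {x : ι → ℝ}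
    (hx : ∀ i, x i ∈ Ioo (0 : ℝ) 1) : ⨆ i, x i ∈ Icc (0 : ℝ) 1 :=
  ⟨Real.iSup_nonneg fun i => (hx i).1.le, Real.iSup_le (fun i => (hx i).2.le) zero_le_one⟩

lemma iSup_eq_max_iSup_succAbove {m : ℕ} (x : Fin (m + 1) → ℝ) (i : Fin (m + 1))
    (hx : ∀ j, 0 ≤ x j) : ⨆ j, x j = max (x i) (⨆ k, x (i.succAbove k)) := by
  have hbdd : BddAbove (range x) := (finite_range x).bddAbove
  refine le_antisymm (ciSup_le fun j => ?_) (max_le (le_ciSup hbdd i) ?_)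
  · rcases eq_or_ne j i with rfl | hj
    · exact le_max_left _ _
    · obtain ⟨k, rfl⟩ := Fin.exists_succAbove_eq hj
      exact (le_ciSup (f := fun k => x (i.succAbove k)) (finite_range _).bddAbove k).trans
        (le_max_right _ _)
  · exact Real.iSup_le (fun k => le_ciSup hbdd _) ((hx i).trans (le_ciSup hbdd i))

lemma div_max_le_iff_le_mul {a b t : ℝ} (ha : 0 < a) (hb : 0 ≤ b) (ht : t < 1) :
    a / max a b ≤ t ↔ a ≤ t * b := by
  rcases le_total a b with hab | hba
  · rw [max_eq_right hab, div_le_iff₀ (ha.trans_le hab)]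
  · rw [max_eq_left hba, div_self ha.ne']
    constructor <;> intro h
    · linarith
    · nlinarith [mul_nonneg (sub_nonneg.2 ht.le) hb, mul_pos (sub_pos.2 ht) ha]

lemma restrict_Ioo_zero_one_prod_setOf_fst_le {β : Type*} [MeasurableSpace β] (ν : Measure β)
    [SFinite ν] {f : β → ℝ} (hf : Measurable f) (hf_le : ∀ᵐ y ∂ν, f y ≤ 1) :
    (volume.restrict (Ioo (0 : ℝ) 1)).prod ν {p | p.1 ≤ f p.2} =
      ∫⁻ y, ENNReal.ofReal (f y) ∂ν := by
  have hs : MeasurableSet {p : ℝ × β | p.1 ≤ f p.2} :=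
    measurableSet_le measurable_fst (hf.comp measurable_snd)
  rw [Measure.prod_apply_symm hs]
  refine lintegral_congr_ae ?_
  filter_upwards [hf_le] with y hy
  rw [← min_eq_left hy]
  exact restrict_Ioo_zero_one_Iic (f y)

lemma pi_restrict_Ioo_zero_one_setOf_iSup_le (m : ℕ) {u : ℝ} (hu : u ∈ Icc (0 : ℝ) 1) :
    Measure.pi (fun _ : Fin m => volume.restrict (Ioo (0 : ℝ) 1)) {x | ⨆ j, x j ≤ u} =
      ENNReal.ofReal u ^ m := by
  have h_box : {x : Fin m → ℝ | ⨆ j, x j ≤ u} = univ.pi fun _ => Iic u := by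
    ext x
    simp only [mem_ofPred_eq, mem_pi, mem_univ, mem_Iic, true_implies]
    exact ⟨fun h j => (le_ciSup (finite_range x).bddAbove j).trans h,
      fun h => Real.iSup_le h hu.1⟩
  rw [h_box, Measure.pi_pi, restrict_Ioo_zero_one_Iic, min_eq_left hu.2, Finset.prod_const,
    Finset.card_univ, Fintype.card_fin]

lemma pi_restrict_Ioo_zero_one_setOf_lt_iSup (m : ℕ) {u : ℝ} (hu : u ∈ Icc (0 : ℝ) 1) :
    Measure.pi (fun _ : Fin m => volume.restrict (Ioo (0 : ℝ) 1)) {x | u < ⨆ j, x j} =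
      ENNReal.ofReal (1 - u ^ m) := by
  have h_compl : {x : Fin m → ℝ | u < ⨆ j, x j} = {x | ⨆ j, x j ≤ u}ᶜ := by
    ext x; simp
  have h_meas : MeasurableSet {x : Fin m → ℝ | ⨆ j, x j ≤ u} :=
    measurableSet_le (Measurable.iSup fun j => measurable_pi_apply j) measurable_const
  rw [h_compl, prob_compl_eq_one_sub h_meas, pi_restrict_Ioo_zero_one_setOf_iSup_le m hu,
    ENNReal.ofReal_sub _ (pow_nonneg hu.1 m), ENNReal.ofReal_one, ENNReal.ofReal_pow hu.1]

lemma lintegral_ofReal_iSup_pi_restrict_Ioo_zero_one (m : ℕ) :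
    ∫⁻ x, ENNReal.ofReal (⨆ j, x j)
        ∂Measure.pi (fun _ : Fin m => volume.restrict (Ioo (0 : ℝ) 1)) = m / (m + 1) := by
  set ν := Measure.pi fun _ : Fin m => volume.restrict (Ioo (0 : ℝ) 1)
  have h_sup : ∀ᵐ x ∂ν, ⨆ j, x j ∈ Icc (0 : ℝ) 1 :=
    (ae_pi_restrict_forall_mem _ fun _ => measurableSet_Ioo).mono
      fun x hx => iSup_mem_Icc_of_forall_mem_Ioo hx
  have h_tail : ∀ u ∈ Ioi (1 : ℝ), ν {x | u < ⨆ j, x j} = 0 := fun u hu =>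
    measure_mono_null (fun x (hx : u < _) (hx1 : _ ∈ Icc (0 : ℝ) 1) =>
      (hx.trans_le (hx1.2.trans hu.le)).false) (ae_iff.1 h_sup)
  have h_int : IntervalIntegrable (fun u : ℝ => 1 - u ^ m) volume 0 1 :=
    (continuous_const.sub (continuous_pow m)).intervalIntegrable 0 1
  calc ∫⁻ x, ENNReal.ofReal (⨆ j, x j) ∂ν = ∫⁻ u in Ioi 0, ν {x | u < ⨆ j, x j} :=
        lintegral_eq_lintegral_meas_lt ν (h_sup.mono fun x hx => hx.1)
          (Measurable.iSup fun j => measurable_pi_apply j).aemeasurable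
    _ = ∫⁻ u in Ioc 0 1, ENNReal.ofReal (1 - u ^ m) := by
        rw [← Ioc_union_Ioi_eq_Ioi zero_le_one, lintegral_union measurableSet_Ioi
          Ioc_disjoint_Ioi_same, setLIntegral_congr_fun measurableSet_Ioi h_tail, lintegral_zero,
          add_zero]
        exact setLIntegral_congr_fun measurableSet_Ioc fun u hu =>
          pi_restrict_Ioo_zero_one_setOf_lt_iSup m (Ioc_subset_Icc_self hu)
    _ = ENNReal.ofReal (∫ u in (0)..1, (1 - u ^ m)) := by
        rw [intervalIntegral.integral_of_le zero_le_one, ofReal_integral_eq_lintegral_ofReal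
          h_int.1 ((ae_restrict_iff' measurableSet_Ioc).2 (ae_of_all _ fun u hu =>
            sub_nonneg.2 (pow_le_one₀ hu.1.le hu.2)))]
    _ = m / (m + 1) := by
        rw [intervalIntegral.integral_sub intervalIntegrable_const
          ((continuous_pow m).intervalIntegrable 0 1), integral_pow]
        have h_real :
            (∫ _ in (0 : ℝ)..1, (1 : ℝ)) - (1 ^ (m + 1) - 0 ^ (m + 1)) / ((m : ℝ) + 1) =
              m / (m + 1) := by
          field_simp
          simp
        rw [h_real, ENNReal.ofReal_div_of_pos (by positivity), ← Nat.cast_add_one,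
          ENNReal.ofReal_natCast, ENNReal.ofReal_natCast, Nat.cast_add_one]

section

variable {m : ℕ} (i : Fin (m + 1))

lemma pi_restrict_Ioo_zero_one_setOf_div_iSup_le {t : ℝ} (ht : t < 1) :
    Measure.pi (fun _ : Fin (m + 1) => volume.restrict (Ioo (0 : ℝ) 1))
        {x | x i / ⨆ j, x j ≤ t} = ENNReal.ofReal t * (m / (m + 1)) := by
  set ρ := volume.restrict (Ioo (0 : ℝ) 1)
  set ν := Measure.pi fun _ : Fin m => ρ
  have h_sup : Measurable fun y : Fin m → ℝ => ⨆ k, y k :=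
    Measurable.iSup fun k => measurable_pi_apply k
  have h_ae : {x : Fin (m + 1) → ℝ | x i / ⨆ j, x j ≤ t}
      =ᵐ[Measure.pi fun _ => ρ] {x | x i ≤ t * ⨆ k, x (i.succAbove k)} := by
    rw [Filter.eventuallyEq_set]
    filter_upwards [ae_pi_restrict_forall_mem _ fun _ => measurableSet_Ioo] with x hx
    rw [iSup_eq_max_iSup_succAbove x i fun j => (hx j).1.le]
    exact div_max_le_iff_le_mul (hx i).1 (iSup_mem_Icc_of_forall_mem_Ioo fun k => hx _).1 ht
  have h_sup_mem : ∀ᵐ y ∂ν, ⨆ k, y k ∈ Icc (0 : ℝ) 1 :=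
    (ae_pi_restrict_forall_mem _ fun _ => measurableSet_Ioo).mono
      fun y hy => iSup_mem_Icc_of_forall_mem_Ioo hy
  have h_le_one : ∀ᵐ y ∂ν, t * ⨆ k, y k ≤ 1 := h_sup_mem.mono fun y hy => by
    nlinarith [hy.1, hy.2]
  have h_set : MeasurableSet {p : ℝ × (Fin m → ℝ) | p.1 ≤ t * ⨆ k, p.2 k} :=
    measurableSet_le measurable_fst (measurable_const.mul (h_sup.comp measurable_snd))
  calc _ = Measure.pi (fun _ => ρ) {x | x i ≤ t * ⨆ k, x (i.succAbove k)} := measure_congr h_ae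
    _ = (ρ.prod ν) {p | p.1 ≤ t * ⨆ k, p.2 k} :=
        (measurePreserving_piFinSuccAbove (fun _ => ρ) i).measure_preimage
          h_set.nullMeasurableSet
    _ = ∫⁻ y, ENNReal.ofReal t * ENNReal.ofReal (⨆ k, y k) ∂ν := by
        refine (restrict_Ioo_zero_one_prod_setOf_fst_le (f := fun y => t * ⨆ k, y k) ν
          (measurable_const.mul h_sup) h_le_one).trans ?_
        exact lintegral_congr_ae (h_sup_mem.mono fun y hy => ENNReal.ofReal_mul' hy.1)
    _ = ENNReal.ofReal t * (m / (m + 1)) := by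
        rw [lintegral_const_mul _ h_sup.ennreal_ofReal,
          lintegral_ofReal_iSup_pi_restrict_Ioo_zero_one]

lemma pi_restrict_Ioo_zero_one_setOf_div_iSup_le_of_one_le {t : ℝ} (ht : 1 ≤ t) :
    Measure.pi (fun _ : Fin (m + 1) => volume.restrict (Ioo (0 : ℝ) 1))
        {x | x i / ⨆ j, x j ≤ t} = 1 := by
  refine (measure_congr (Filter.eventuallyEq_univ.2 ?_)).trans measure_univ
  filter_upwards [ae_pi_restrict_forall_mem _ fun _ => measurableSet_Ioo] with x hx
  exact (div_le_one_of_le₀ (le_ciSup (finite_range x).bddAbove i)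
    (iSup_mem_Icc_of_forall_mem_Ioo hx).1).trans ht

end

theorem max_normalized_uniform_law_general
    {Ω : Type*} [MeasurableSpace Ω] (μ : Measure Ω)
    (n : ℕ) (U : Fin n → Ω → ℝ) (hU : ∀ i, Measurable (U i))
    (hiid : iIndepFun U μ)
    (hunif : ∀ i, Measure.map (U i) μ = volume.restrict (Ioo (0:ℝ) 1)) :
    ∀ i, Measure.map (fun ω => U i ω / (⨆ j, U j ω)) μ =
      ((n : ℝ≥0∞))⁻¹ • Measure.dirac (1:ℝ) +
        (((n : ℝ≥0∞) - 1) / n) • volume.restrict (Ioo (0:ℝ) 1) := by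
  intro i
  obtain ⟨m, rfl⟩ : ∃ m, n = m + 1 := Nat.exists_eq_add_one.2 i.pos
  have h_joint :
      μ.map (fun ω j => U j ω) = Measure.pi fun _ => volume.restrict (Ioo (0 : ℝ) 1) := by
    rw [hiid.map_fun_eq_pi_map fun j => (hU j).aemeasurable]
    simp_rw [hunif]
  have h_ratio : Measurable fun x : Fin (m + 1) → ℝ => x i / ⨆ j, x j :=
    (measurable_pi_apply i).div (Measurable.iSup fun j => measurable_pi_apply j)
  rw [show (fun ω => U i ω / ⨆ j, U j ω) = (fun x => x i / ⨆ j, x j) ∘ fun ω j => U j ω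
    from rfl, ← Measure.map_map h_ratio (measurable_pi_lambda _ hU), h_joint]
  refine Measure.ext_of_Iic _ _ fun t => ?_
  rw [Measure.map_apply h_ratio measurableSet_Iic,
    show _ ⁻¹' Iic t = {x : Fin (m + 1) → ℝ | x i / ⨆ j, x j ≤ t} from rfl, Measure.add_apply,
    Measure.smul_apply, Measure.smul_apply, Measure.dirac_apply' _ measurableSet_Iic,
    restrict_Ioo_zero_one_Iic]
  push_cast
  rw [ENNReal.add_sub_cancel_right one_ne_top]
  rcases lt_or_ge t 1 with ht | ht
  · rw [pi_restrict_Ioo_zero_one_setOf_div_iSup_le i ht, min_eq_left ht.le,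
      indicator_of_notMem (notMem_Iic.2 ht)]
    simp [mul_comm]
  · rw [pi_restrict_Ioo_zero_one_setOf_div_iSup_le_of_one_le i ht,
      min_eq_right ht, indicator_of_mem (mem_Iic.2 ht)]
    simp only [Pi.one_apply, ENNReal.ofReal_one, smul_eq_mul, mul_one]
    rw [← one_div, ENNReal.div_add_div_same, add_comm 1, ENNReal.div_self (by simp) (by simp)]

/-- If U₁,...,Uₙ are i.i.d. U(0,1), M = max Uᵢ and Vᵢ = Uᵢ/M, then the law of each
Vᵢ is (1/n)·δ₁ + ((n-1)/n)·U(0,1); in particular P(Vᵢ = 1) = 1/n and conditionally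
on Vᵢ < 1 it is uniform. -/
theorem max_normalized_uniform_law
    {Ω : Type*} [MeasurableSpace Ω] (μ : Measure Ω) [IsProbabilityMeasure μ]
    (n : ℕ) (hn : 1 ≤ n) (U : Fin n → Ω → ℝ) (hU : ∀ i, Measurable (U i))
    (hiid : iIndepFun U μ)
    (hunif : ∀ i, Measure.map (U i) μ = volume.restrict (Ioo (0:ℝ) 1)) :
    ∀ i, Measure.map (fun ω => U i ω / (⨆ j, U j ω)) μ =
      ((n : ℝ≥0∞))⁻¹ • Measure.dirac (1:ℝ) +
        (((n : ℝ≥0∞) - 1) / n) • volume.restrict (Ioo (0:ℝ) 1) :=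
  max_normalized_uniform_law_general μ n U hU hiid hunif
end

section
/- For n ≥ 2 and p > n-1, the radial distribution function satisfies P(R^{(p)} ≤ r) → r^n for every r ∈ (0,1) as p → ∞, where R^{(p)} has density f(r) = Γ(1/p)/(Γ(n/p)Γ(1-(n-1)/p)) r^{n-1}(1-r^p)^{-(n-1)/p} on (0,1). In particular the pointwise limit of the densities on (0,1) is n·r^{n-1}, the density of max of n i.i.d. U(0,1) random variables. -/
open MeasureTheory Set Real Filter

/-!
The normalizing constant tends to `n`: by `Γ(s) = Γ(1 + s) / s` it equals
`n Γ(1 + 1/p) / (Γ(1 + n/p) Γ(1 - (n-1)/p))`, and each Gamma factor tends to `Γ(1) = 1`.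
For fixed `r < 1` the weight `(1 - x^p)^{-(n-1)/p}` is increasing in `x ∈ [0, r]` and squeezed
between `1` and its value at `r`, which tends to `1` because `r^p → 0` and the exponent tends
to `0`. Hence the integral of `x^{n-1}` times the weight over `[0, r]` tends to `r^n / n`.
-/

noncomputable def radialConst (n p : ℝ) : ℝ :=
  Gamma (1 / p) / (Gamma (n / p) * Gamma (1 - (n - 1) / p))

noncomputable def radialWeight (n p x : ℝ) : ℝ :=
  (1 - x ^ p) ^ (-((n - 1) / p))

lemma tendsto_const_div_atTop_zero (a : ℝ) : Tendsto (fun p : ℝ => a / p) atTop (nhds 0) :=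
  tendsto_const_nhds.div_atTop tendsto_id

lemma tendsto_Gamma_one_add_div_atTop (a : ℝ) :
    Tendsto (fun p : ℝ => Gamma (1 + a / p)) atTop (nhds 1) := by
  have hΓ : ContinuousAt Gamma 1 :=
    (differentiableAt_Gamma fun m => by linarith [Nat.cast_nonneg (α := ℝ) m]).continuousAt
  have hlim : Tendsto (fun p : ℝ => 1 + a / p) atTop (nhds 1) := by
    simpa using (tendsto_const_div_atTop_zero a).const_add 1
  simpa only [Gamma_one, Function.comp_def] using hΓ.tendsto.comp hlim

lemma Gamma_eq_Gamma_one_add_div {s : ℝ} (hs : s ≠ 0) : Gamma s = Gamma (1 + s) / s := by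
  rw [add_comm, Gamma_add_one hs]
  field_simp

lemma radialConst_eq {n p : ℝ} (hn : n ≠ 0) (hp : p ≠ 0) :
    radialConst n p = n * Gamma (1 + 1 / p) / (Gamma (1 + n / p) * Gamma (1 - (n - 1) / p)) := by
  rw [radialConst, Gamma_eq_Gamma_one_add_div (by positivity : 1 / p ≠ 0),
    Gamma_eq_Gamma_one_add_div (div_ne_zero hn hp)]
  field_simp

lemma tendsto_radialConst_atTop {n : ℝ} (hn : n ≠ 0) :
    Tendsto (radialConst n) atTop (nhds n) := by
  have h₁ := tendsto_Gamma_one_add_div_atTop 1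
  have h₂ := tendsto_Gamma_one_add_div_atTop n
  have h₃ : Tendsto (fun p : ℝ => Gamma (1 - (n - 1) / p)) atTop (nhds 1) := by
    simpa only [neg_div, ← sub_eq_add_neg] using tendsto_Gamma_one_add_div_atTop (-(n - 1))
  have hlim := (h₁.const_mul n).div (h₂.mul h₃) (by norm_num)
  rw [mul_one, mul_one, div_one] at hlim
  refine hlim.congr' ?_
  filter_upwards [eventually_ne_atTop 0] with p hp
  exact (radialConst_eq hn hp).symm

lemma tendsto_radialWeight_atTop (n : ℝ) {x : ℝ} (hx₀ : 0 ≤ x) (hx₁ : x < 1) :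
    Tendsto (fun p => radialWeight n p x) atTop (nhds 1) := by
  have hbase : Tendsto (fun p : ℝ => 1 - x ^ p) atTop (nhds 1) := by
    simpa using (tendsto_rpow_atTop_of_base_lt_one x (by linarith) hx₁).const_sub 1
  have hexp : Tendsto (fun p : ℝ => -((n - 1) / p)) atTop (nhds 0) := by
    simpa using (tendsto_const_div_atTop_zero (n - 1)).neg
  simpa only [one_rpow, radialWeight] using hbase.rpow hexp (Or.inl one_ne_zero)

section Weight

variable {n p : ℝ}

lemma one_sub_rpow_pos (hp : 0 < p) {x : ℝ} (hx : x ∈ Ico (0 : ℝ) 1) : 0 < 1 - x ^ p := by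
  linarith [rpow_lt_one hx.1 hx.2 hp]

lemma continuousOn_radialWeight (hp : 0 < p) : ContinuousOn (radialWeight n p) (Ico 0 1) :=
  ((continuousOn_const.sub (continuousOn_id.rpow_const fun _ _ => Or.inr hp.le)).rpow_const
    fun _ hx => Or.inl (one_sub_rpow_pos hp hx).ne')

lemma one_le_radialWeight (hn : 1 ≤ n) (hp : 0 < p) {x : ℝ} (hx : x ∈ Ico (0 : ℝ) 1) :
    1 ≤ radialWeight n p x :=
  one_le_rpow_of_pos_of_le_one_of_nonpos (one_sub_rpow_pos hp hx)
    (by linarith [rpow_nonneg hx.1 p]) (neg_nonpos.mpr (div_nonneg (by linarith) hp.le))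

lemma monotoneOn_radialWeight (hn : 1 ≤ n) (hp : 0 < p) :
    MonotoneOn (radialWeight n p) (Ico 0 1) := fun x hx y hy hxy =>
  rpow_le_rpow_of_nonpos (one_sub_rpow_pos hp hy)
    (by linarith [rpow_le_rpow hx.1 hxy hp.le]) (neg_nonpos.mpr (div_nonneg (by linarith) hp.le))

end Weight

section Integral

variable {n p r : ℝ}

lemma integral_rpow_sub_one (hn : 0 < n) : ∫ x in (0 : ℝ)..r, x ^ (n - 1) = r ^ n / n := by
  rw [integral_rpow (Or.inl (by linarith)), sub_add_cancel, zero_rpow hn.ne', sub_zero]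

lemma intervalIntegrable_rpow_sub_one_mul_radialWeight (hn : 1 ≤ n) (hp : 0 < p)
    (hr₀ : 0 ≤ r) (hr₁ : r < 1) :
    IntervalIntegrable (fun x => x ^ (n - 1) * radialWeight n p x) volume 0 r := by
  refine ContinuousOn.intervalIntegrable ?_
  rw [uIcc_of_le hr₀]
  exact (continuousOn_id.rpow_const fun _ _ => Or.inr (by linarith)).mul
    ((continuousOn_radialWeight hp).mono (Icc_subset_Ico_right hr₁))

lemma integral_rpow_sub_one_mul_radialWeight_mem_Icc (hn : 1 ≤ n) (hp : 0 < p)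
    (hr₀ : 0 ≤ r) (hr₁ : r < 1) :
    ∫ x in (0 : ℝ)..r, x ^ (n - 1) * radialWeight n p x ∈
      Icc (r ^ n / n) (radialWeight n p r * (r ^ n / n)) := by
  have hpow : IntervalIntegrable (fun x : ℝ => x ^ (n - 1)) volume 0 r :=
    intervalIntegral.intervalIntegrable_rpow' (by linarith)
  have hint := intervalIntegrable_rpow_sub_one_mul_radialWeight hn hp hr₀ hr₁
  have hIco : ∀ x ∈ Icc 0 r, x ∈ Ico (0 : ℝ) 1 := fun x hx =>
    ⟨hx.1, hx.2.trans_lt hr₁⟩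
  rw [← integral_rpow_sub_one (by linarith), ← intervalIntegral.integral_const_mul]
  constructor
  · refine intervalIntegral.integral_mono_on hr₀ hpow hint fun x hx => ?_
    exact le_mul_of_one_le_right (rpow_nonneg hx.1 _) (one_le_radialWeight hn hp (hIco x hx))
  · refine intervalIntegral.integral_mono_on hr₀ hint (hpow.const_mul _) fun x hx => ?_
    rw [mul_comm (radialWeight n p r)]
    exact mul_le_mul_of_nonneg_left
      (monotoneOn_radialWeight hn hp (hIco x hx) (hIco r ⟨hr₀, le_rfl⟩) hx.2)
      (rpow_nonneg hx.1 _)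

lemma tendsto_integral_rpow_sub_one_mul_radialWeight (hn : 1 ≤ n) (hr₀ : 0 ≤ r)
    (hr₁ : r < 1) :
    Tendsto (fun p => ∫ x in (0 : ℝ)..r, x ^ (n - 1) * radialWeight n p x) atTop
      (nhds (r ^ n / n)) := by
  have hupper : Tendsto (fun p => radialWeight n p r * (r ^ n / n)) atTop (nhds (r ^ n / n)) := by
    simpa using (tendsto_radialWeight_atTop n hr₀ hr₁).mul_const (r ^ n / n)
  have hbounds := (eventually_gt_atTop 0).mono fun p hp =>
    integral_rpow_sub_one_mul_radialWeight_mem_Icc hn hp hr₀ hr₁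
  exact tendsto_of_tendsto_of_tendsto_of_le_of_le' tendsto_const_nhds hupper
    (hbounds.mono fun _ h => h.1) (hbounds.mono fun _ h => h.2)

end Integral

/-- As p → ∞, the radial CDF converges to r^n for every r ∈ (0,1), and the radial
density converges pointwise to n r^{n-1}, the density of the maximum of n i.i.d.
U(0,1) random variables. -/
theorem radial_limit_at_top (n : ℕ) (hn : 2 ≤ n) :
    ∀ r ∈ Ioo (0:ℝ) 1,
      Tendsto (fun p : ℝ => ∫ x in (0:ℝ)..r,
          Real.Gamma (1/p) / (Real.Gamma (n/p) * Real.Gamma (1 - ((n : ℝ) - 1)/p)) *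
            x ^ ((n : ℝ) - 1) * (1 - x ^ p) ^ (-(((n : ℝ) - 1)/p)))
        atTop (nhds (r ^ n)) ∧
      Tendsto (fun p : ℝ =>
          Real.Gamma (1/p) / (Real.Gamma (n/p) * Real.Gamma (1 - ((n : ℝ) - 1)/p)) *
            r ^ ((n : ℝ) - 1) * (1 - r ^ p) ^ (-(((n : ℝ) - 1)/p)))
        atTop (nhds (n * r ^ ((n : ℝ) - 1))) := by
  rintro r ⟨hr₀, hr₁⟩
  have hn₁ : (1 : ℝ) ≤ n := by exact_mod_cast one_le_two.trans hn
  have hn₀ : (n : ℝ) ≠ 0 := by positivity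
  have hconst := tendsto_radialConst_atTop hn₀
  constructor
  · have hlim := hconst.mul (tendsto_integral_rpow_sub_one_mul_radialWeight hn₁ hr₀.le hr₁)
    rw [mul_div_cancel₀ _ hn₀, rpow_natCast] at hlim
    refine hlim.congr fun p => ?_
    simp only [radialConst, radialWeight, mul_assoc, intervalIntegral.integral_const_mul]
  · have hlim := (hconst.mul_const (r ^ ((n : ℝ) - 1))).mul
      (tendsto_radialWeight_atTop n hr₀.le hr₁)
    rwa [mul_one] at hlim
end

section
/- For any p > 1, 12 · Γ(2/p)²/(3·Γ(1/p)·Γ(3/p)) - 3 ∈ [-1, 0); i.e., the correlation ρ_p = 4Γ(2/p)²/(Γ(1/p)Γ(3/p)) - 3 of the bivariate positive L_p-norm spherical copula satisfies -1 ≤ ρ_p < 0. -/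
/-! With `Q(x) = Γ(x)Γ(3x)/Γ(2x)²` and `x = 1/p ∈ (0, 1)` the correlation is `4 / Q(x) - 3`, so it
suffices that `4/3 < Q(x) ≤ 2`. Gauss's limit formula for `Γ` writes `Q(x)` as the infinite product
of the factors `(2x + j)² / ((x + j)(3x + j)) = 1 + x² / ((x + j)(3x + j))`, `j ≥ 0`. The factor
at `j = 0` is `4/3` and every other one exceeds `1`, which gives the lower bound; every factor
increases with `x`, so `Q(x) ≤ Q(1) = Γ(3)/Γ(2)² = 2`. -/

open Real Filter Topology Finset

theorem gammaSeq_mul_div_gammaSeq_mul {a b c d : ℝ} (ha : 0 < a) (hb : 0 < b) (hc : 0 < c)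
    (hd : 0 < d) (habcd : a + b = c + d) {n : ℕ} (hn : n ≠ 0) :
    GammaSeq a n * GammaSeq b n / (GammaSeq c n * GammaSeq d n) =
      ∏ j ∈ range (n + 1), (c + j) * (d + j) / ((a + j) * (b + j)) := by
  have hn₀ : (0 : ℝ) < n := by positivity
  have hpow : (n : ℝ) ^ a * (n : ℝ) ^ b = (n : ℝ) ^ c * (n : ℝ) ^ d := by
    rw [← rpow_add hn₀, ← rpow_add hn₀, habcd]
  have hprod : ∀ s : ℝ, 0 < s → ∏ j ∈ range (n + 1), (s + j) ≠ 0 := fun s hs =>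
    (prod_pos fun j _ => by positivity).ne'
  simp only [GammaSeq, prod_div_distrib, prod_mul_distrib]
  field_simp [hprod a ha, hprod b hb, hprod c hc, hprod d hd, n.factorial_ne_zero]
  rw [hpow]

theorem tendsto_prod_gamma_mul_div_gamma_mul {a b c d : ℝ} (ha : 0 < a) (hb : 0 < b)
    (hc : 0 < c) (hd : 0 < d) (habcd : a + b = c + d) :
    Tendsto (fun n : ℕ => ∏ j ∈ range (n + 1), (c + j) * (d + j) / ((a + j) * (b + j))) atTop
      (𝓝 (Gamma a * Gamma b / (Gamma c * Gamma d))) := by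
  have hΓ : Gamma c * Gamma d ≠ 0 := (mul_pos (Gamma_pos_of_pos hc) (Gamma_pos_of_pos hd)).ne'
  refine (((GammaSeq_tendsto_Gamma a).mul (GammaSeq_tendsto_Gamma b)).div
    ((GammaSeq_tendsto_Gamma c).mul (GammaSeq_tendsto_Gamma d)) hΓ).congr' ?_
  filter_upwards [eventually_ne_atTop 0] with n hn
  exact gammaSeq_mul_div_gammaSeq_mul ha hb hc hd habcd hn

noncomputable def gammaRatio (x : ℝ) : ℝ :=
  Gamma x * Gamma (3 * x) / (Gamma (2 * x) * Gamma (2 * x))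

noncomputable def gammaRatioFactor (x : ℝ) (j : ℕ) : ℝ :=
  (2 * x + j) * (2 * x + j) / ((x + j) * (3 * x + j))

theorem tendsto_prod_gammaRatioFactor {x : ℝ} (hx : 0 < x) :
    Tendsto (fun n : ℕ => ∏ j ∈ range (n + 1), gammaRatioFactor x j) atTop
      (𝓝 (gammaRatio x)) :=
  tendsto_prod_gamma_mul_div_gamma_mul hx (by positivity) (by positivity) (by positivity)
    (by ring)

theorem gammaRatioFactor_zero {x : ℝ} (hx : 0 < x) : gammaRatioFactor x 0 = 4 / 3 := by
  simp only [gammaRatioFactor, CharP.cast_eq_zero, add_zero]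
  field_simp
  ring

theorem one_lt_gammaRatioFactor {x : ℝ} (hx : 0 < x) (j : ℕ) : 1 < gammaRatioFactor x j := by
  rw [gammaRatioFactor, one_lt_div (by positivity)]
  nlinarith

-- The factor is `1 + 1 / ((1 + j/x)(3 + j/x))`.
theorem gammaRatioFactor_mono {x y : ℝ} (hx : 0 < x) (hxy : x ≤ y) (j : ℕ) :
    gammaRatioFactor x j ≤ gammaRatioFactor y j := by
  have hy : 0 < y := hx.trans_le hxy
  have hj : (0 : ℝ) ≤ j := j.cast_nonneg
  rw [gammaRatioFactor, gammaRatioFactor, div_le_div_iff₀ (by positivity) (by positivity)]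
  nlinarith [mul_nonneg (mul_nonneg (mul_nonneg hx.le hy.le) hj) (sub_nonneg.2 hxy),
    mul_nonneg (mul_nonneg hj hj) (mul_nonneg (sub_nonneg.2 hxy) (add_pos hx hy).le)]

theorem gammaRatio_mono {x y : ℝ} (hx : 0 < x) (hxy : x ≤ y) : gammaRatio x ≤ gammaRatio y :=
  le_of_tendsto_of_tendsto' (tendsto_prod_gammaRatioFactor hx)
    (tendsto_prod_gammaRatioFactor (hx.trans_le hxy)) fun _ =>
      prod_le_prod (fun j _ => (zero_lt_one.trans (one_lt_gammaRatioFactor hx j)).le)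
        fun j _ => gammaRatioFactor_mono hx hxy j

theorem four_thirds_lt_gammaRatio {x : ℝ} (hx : 0 < x) : 4 / 3 < gammaRatio x := by
  have hmono : Monotone fun n : ℕ => ∏ j ∈ range (n + 1), gammaRatioFactor x j := by
    refine monotone_nat_of_le_succ fun n => ?_
    rw [prod_range_succ _ (n + 1)]
    exact le_mul_of_one_le_right (prod_pos fun j _ => zero_lt_one.trans
      (one_lt_gammaRatioFactor hx j)).le (one_lt_gammaRatioFactor hx _).le
  calc 4 / 3 < 4 / 3 * gammaRatioFactor x 1 :=
        lt_mul_of_one_lt_right (by norm_num) (one_lt_gammaRatioFactor hx 1)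
    _ = ∏ j ∈ range (1 + 1), gammaRatioFactor x j := by
        rw [prod_range_succ, prod_range_one, gammaRatioFactor_zero hx]
    _ ≤ gammaRatio x := hmono.ge_of_tendsto (tendsto_prod_gammaRatioFactor hx) 1

theorem gammaRatio_one : gammaRatio 1 = 2 := by
  norm_num [gammaRatio, Gamma_two, show (3 : ℝ) = 2 + 1 by norm_num, Gamma_add_one]

/-- For every p > 1, the correlation ρ_p = 4Γ(2/p)²/(Γ(1/p)Γ(3/p)) - 3 of the
bivariate positive L_p-norm spherical copula satisfies -1 ≤ ρ_p < 0. -/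
theorem correlation_range (p : ℝ) (hp : 1 < p) :
    -1 ≤ 4 * Real.Gamma (2/p) ^ 2 / (Real.Gamma (1/p) * Real.Gamma (3/p)) - 3 ∧
    4 * Real.Gamma (2/p) ^ 2 / (Real.Gamma (1/p) * Real.Gamma (3/p)) - 3 < 0 := by
  have hx : 0 < 1 / p := by positivity
  have hlow : 4 / 3 < gammaRatio (1 / p) := four_thirds_lt_gammaRatio hx
  have hup : gammaRatio (1 / p) ≤ 2 :=
    gammaRatio_one ▸ gammaRatio_mono hx ((div_le_one (by linarith)).2 hp.le)
  have hpos : 0 < gammaRatio (1 / p) := by linarith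
  have hρ : 4 * Gamma (2 / p) ^ 2 / (Gamma (1 / p) * Gamma (3 / p)) = 4 / gammaRatio (1 / p) := by
    rw [gammaRatio, div_div_eq_mul_div, sq, mul_one_div, mul_one_div]
  rw [hρ]
  constructor
  · linarith [(le_div_iff₀ hpos).2 (by linarith : 2 * gammaRatio (1 / p) ≤ 4)]
  · rw [sub_neg, div_lt_iff₀ hpos]; linarith
end
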